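/- For all integers n, m with 0 < m < n, each wavelet function is orthogonal to every scaling function of the same order with respect to the Chebyshev weight: ⟨ψ_{n,k}^m, Φ_{n,h}^m⟩ = ∫_{−1}^{1} ψ_{n,k}^m(x) Φ_{n,h}^m(x) w(x) dx = 0 for all k = 1,…,2n and h = 1,…,n. -/

import Mathlib

open Real MeasureTheory Finset

/-- Chebyshev nodes of the first kind: `x_k^n = cos((2k-1)π/(2n))`. -/
noncomputable def chebNode (n k : ℕ) : ℝ :=
  Real.cos ((2 * (k : ℝ) - 1) * Real.pi / (2 * (n : ℝ)))

/-- Orthonormal Chebyshev polynomials of the first kind. -/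
noncomputable def chebP (r : ℕ) (x : ℝ) : ℝ :=
  if r = 0 then Real.sqrt (1 / Real.pi)
  else Real.sqrt (2 / Real.pi) * Real.cos ((r : ℝ) * Real.arccos x)

/-- Darboux kernel `K_r(x,y) = Σ_{s=0}^r p_s(x) p_s(y)`. -/
noncomputable def darboux (r : ℕ) (x y : ℝ) : ℝ :=
  ∑ s ∈ Finset.range (r + 1), chebP s x * chebP s y

/-- de la Vallée Poussin kernel `v_n^m(x,y) = (1/(2m)) Σ_{r=n-m}^{n+m-1} K_r(x,y)`. -/
noncomputable def vpK (n m : ℕ) (x y : ℝ) : ℝ :=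
  (1 / (2 * (m : ℝ))) * ∑ r ∈ Finset.Icc (n - m) (n + m - 1), darboux r x y

/-- The Chebyshev weight `w(x) = 1/√(1-x²)`. -/
noncomputable def chebW (x : ℝ) : ℝ := 1 / Real.sqrt (1 - x ^ 2)

/-- Scaling functions `Φ_{n,k}^m(x) = (π/n) v_n^m(x_k^n, x)`. -/
noncomputable def scal (n m k : ℕ) (x : ℝ) : ℝ :=
  (Real.pi / (n : ℝ)) * vpK n m (chebNode n k) x

/-- The nodes `y_k^n`, `k = 1,…,2n`: the Chebyshev nodes of order `3n` not of order `n`. -/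
noncomputable def yNode (n k : ℕ) : ℝ := chebNode (3 * n) (3 * k / 2)

/-- Wavelet functions `ψ_{n,k}^m`. -/
noncomputable def wav (n m k : ℕ) (x : ℝ) : ℝ :=
  (Real.pi / (3 * (n : ℝ))) * vpK (3 * n) m (yNode n k) x -
    ∑ h ∈ Finset.Icc 1 n,
      scal n m h (yNode n k) * ((Real.pi / (3 * (n : ℝ))) * vpK (3 * n) m (chebNode n h) x)

/-- Filter coefficients `μ_{n,r}^m`. -/
noncomputable def muC (n m r : ℕ) : ℝ :=
  if r ≤ n - m then 1
  else if r < n + m then ((m : ℝ) + (n : ℝ) - (r : ℝ)) / (2 * (m : ℝ))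
  else 0

/-- Squared norms `ν_{n,r}^m` of the orthogonal scaling basis. -/
noncomputable def nuC (n m r : ℕ) : ℝ :=
  if r ≤ n - m then 1 else ((m : ℝ) ^ 2 + ((n : ℝ) - (r : ℝ)) ^ 2) / (2 * (m : ℝ) ^ 2)

/-- Orthogonal scaling basis `Φ_{n,r}^⊥`. -/
noncomputable def scalPerp (n m r : ℕ) (x : ℝ) : ℝ :=
  if r ≤ n - m then chebP r x
  else muC n m r * chebP r x - muC n m (2 * n - r) * chebP (2 * n - r) x

/-- The sup norm on `[-1,1]`. -/
noncomputable def supNorm (f : ℝ → ℝ) : ℝ := ⨆ x : Set.Icc (-1 : ℝ) 1, |f x|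

/-- The Lebesgue constant `c_∞ = max_{|x|≤1} ∫_{-1}^1 |v_n^m(x,y)| w(y) dy`. -/
noncomputable def cInf (n m : ℕ) : ℝ :=
  ⨆ x : Set.Icc (-1 : ℝ) 1, ∫ y in (-1 : ℝ)..1, |vpK n m x y| * chebW y


section WavProof
lemma chebW_nonneg (x : ℝ) : 0 ≤ chebW x := by
  unfold chebW; positivity

lemma chebW_meas : Measurable chebW := by
  have : chebW = fun x => (Real.sqrt (1 - x ^ 2))⁻¹ := by
    funext x; rw [chebW, one_div]
  rw [this]
  exact ((continuous_const.sub (continuous_pow 2)).sqrt.measurable).inv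

lemma chebW_intble : IntervalIntegrable chebW volume (-1) 1 := by
  have ha : IntervalIntegrable (fun x : ℝ => x ^ (-(1:ℝ)/2)) volume 0 2 :=
    intervalIntegral.intervalIntegrable_rpow' (by norm_num)
  have hb : IntervalIntegrable (fun x : ℝ => (1 - x) ^ (-(1:ℝ)/2)) volume (-1) 1 := by
    have h := (ha.comp_sub_left 1).symm
    have e1 : (1:ℝ) - 2 = -1 := by norm_num
    have e2 : (1:ℝ) - 0 = 1 := by norm_num
    rwa [e1, e2] at h
  have hc : IntervalIntegrable (fun x : ℝ => (1 + x) ^ (-(1:ℝ)/2)) volume (-1) 1 := by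
    have h := ha.comp_add_right 1
    have he : (fun x : ℝ => (1 + x) ^ (-(1:ℝ)/2)) = fun x => (x + 1) ^ (-(1:ℝ)/2) := by
      funext x; rw [add_comm]
    have e1 : (0:ℝ) - 1 = -1 := by norm_num
    have e2 : (2:ℝ) - 1 = 1 := by norm_num
    rw [he]; rwa [e1, e2] at h
  have h1 := hb.add hc
  apply h1.mono_fun (chebW_meas.aestronglyMeasurable)
  filter_upwards with x
  rcases le_or_gt (1 - x ^ 2) 0 with h | h
  · have hz : chebW x = 0 := by
      rw [chebW, Real.sqrt_eq_zero'.mpr h, div_zero]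
    rw [Real.norm_eq_abs, hz, abs_zero]
    exact norm_nonneg _
  · have hx2' : 0 < 1 - x := by nlinarith
    have hx1' : 0 < 1 + x := by nlinarith
    rw [Real.norm_eq_abs, Real.norm_eq_abs, abs_of_nonneg (chebW_nonneg x),
      abs_of_nonneg (add_nonneg (Real.rpow_nonneg hx2'.le _) (Real.rpow_nonneg hx1'.le _))]
    set a := Real.sqrt (1 - x) with hadef
    set b := Real.sqrt (1 + x) with hbdef
    have ha0 : 0 < a := Real.sqrt_pos.mpr hx2'
    have hb0 : 0 < b := Real.sqrt_pos.mpr hx1'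
    have ha2 : a ^ 2 = 1 - x := Real.sq_sqrt hx2'.le
    have hb2 : b ^ 2 = 1 + x := Real.sq_sqrt hx1'.le
    have e0 : chebW x = 1 / (a * b) := by
      rw [chebW, ← Real.sqrt_mul hx2'.le]
      ring_nf
    have e1 : (1 - x) ^ (-(1:ℝ)/2) = 1 / a := by
      rw [hadef, show (-(1:ℝ)/2) = -(1/2 : ℝ) by norm_num, Real.rpow_neg hx2'.le,
        ← Real.sqrt_eq_rpow, one_div]
    have e2 : (1 + x) ^ (-(1:ℝ)/2) = 1 / b := by
      rw [hbdef, show (-(1:ℝ)/2) = -(1/2 : ℝ) by norm_num, Real.rpow_neg hx1'.le,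
        ← Real.sqrt_eq_rpow, one_div]
    rw [e0, e1, e2]
    rw [div_add_div _ _ (ne_of_gt ha0) (ne_of_gt hb0),
      div_le_div_iff₀ (by positivity) (by positivity)]
    nlinarith [sq_nonneg (a + b), sq_nonneg (a - b)]

/-- products of bounded measurable functions with `chebW` are integrable -/
lemma intble_mul_chebW {f : ℝ → ℝ} (hf : Measurable f) (C : ℝ)
    (hC : ∀ x, |f x| ≤ C) : IntervalIntegrable (fun x => f x * chebW x) volume (-1) 1 := by
  have hg : IntervalIntegrable (fun x => C * chebW x) volume (-1) 1 :=
    chebW_intble.const_mul C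
  apply hg.mono_fun ((hf.mul chebW_meas).aestronglyMeasurable)
  filter_upwards with x
  rw [Real.norm_eq_abs, Real.norm_eq_abs, Pi.mul_apply, abs_mul, abs_mul, abs_of_nonneg (chebW_nonneg x)]
  have hC0 : 0 ≤ C := le_trans (abs_nonneg _) (hC x)
  rw [abs_of_nonneg hC0]
  exact mul_le_mul_of_nonneg_right (hC x) (chebW_nonneg x)

lemma cos_arccos_meas (r : ℤ) : Measurable (fun x : ℝ => Real.cos (r * Real.arccos x)) :=
  (Real.continuous_cos.comp (continuous_const.mul Real.continuous_arccos)).measurable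

lemma core_intble (r : ℤ) :
    IntervalIntegrable (fun x => Real.cos (r * Real.arccos x) * chebW x) volume (-1) 1 :=
  intble_mul_chebW (cos_arccos_meas r) 1 (fun x => Real.abs_cos_le_one _)

/-- The core integral. -/
lemma core_integral (r : ℤ) :
    (∫ x in (-1:ℝ)..1, Real.cos (r * Real.arccos x) * chebW x)
      = if r = 0 then Real.pi else 0 := by
  by_cases hr : r = 0
  · subst hr
    have hF : ∀ x ∈ Set.Ioo (-1:ℝ) 1, HasDerivWithinAt (fun y => -Real.arccos y)
        (Real.cos ((0:ℤ) * Real.arccos x) * chebW x) (Set.Ioi x) x := by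
      intro x hx
      have h := (Real.hasDerivAt_arccos (ne_of_gt hx.1) (ne_of_lt hx.2)).neg
      have : Real.cos ((0:ℤ) * Real.arccos x) * chebW x = 1 / Real.sqrt (1 - x ^ 2) := by
        push_cast; rw [zero_mul, Real.cos_zero, one_mul, chebW]
      rw [this]
      exact (h.congr_deriv (by ring)).hasDerivWithinAt
    rw [intervalIntegral.integral_eq_sub_of_hasDeriv_right_of_le (by norm_num)
      (Real.continuous_arccos.neg.continuousOn) hF (core_intble 0)]
    simp [Real.arccos_one, Real.arccos_neg_one]
  · have hF : ∀ x ∈ Set.Ioo (-1:ℝ) 1, HasDerivWithinAt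
        (fun y => -Real.sin (r * Real.arccos y) / r)
        (Real.cos (r * Real.arccos x) * chebW x) (Set.Ioi x) x := by
      intro x hx
      have harc := Real.hasDerivAt_arccos (ne_of_gt hx.1) (ne_of_lt hx.2)
      have hin : HasDerivAt (fun y : ℝ => (r : ℝ) * Real.arccos y)
          ((r : ℝ) * -(1 / Real.sqrt (1 - x ^ 2))) x := harc.const_mul _
      have hsin := (Real.hasDerivAt_sin ((r : ℝ) * Real.arccos x)).comp x hin
      have h2 := (hsin.neg).div_const (r : ℝ)
      have hsq : Real.sqrt (1 - x ^ 2) ≠ 0 := by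
        have : 0 < 1 - x ^ 2 := by nlinarith [hx.1, hx.2]
        positivity
      have hre : (r : ℝ) ≠ 0 := Int.cast_ne_zero.mpr hr
      refine (h2.congr_deriv ?_).hasDerivWithinAt
      rw [chebW]
      field_simp
    rw [intervalIntegral.integral_eq_sub_of_hasDeriv_right_of_le (by norm_num)
      (((Real.continuous_sin.comp (continuous_const.mul Real.continuous_arccos)).neg.div_const
        _).continuousOn) hF (core_intble r)]
    rw [if_neg hr]
    simp only [Function.comp_apply, Pi.neg_apply, Pi.mul_apply, Real.arccos_one, Real.arccos_neg_one, mul_zero,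
      Real.sin_zero, Real.sin_int_mul_pi]
    simp

lemma cosmul (a b : ℝ) : Real.cos a * Real.cos b = (Real.cos (a+b) + Real.cos (a-b))/2 := by
  rw [Real.cos_add, Real.cos_sub]; ring

lemma chebP_meas (r : ℕ) : Measurable (chebP r) := by
  unfold chebP
  split_ifs
  · exact measurable_const
  · exact (continuous_const.mul
      (Real.continuous_cos.comp (continuous_const.mul Real.continuous_arccos))).measurable

lemma chebP_bound (r : ℕ) (x : ℝ) : |chebP r x| ≤ Real.sqrt (2 / Real.pi) := by
  unfold chebP
  split_ifs
  · rw [abs_of_nonneg (Real.sqrt_nonneg _)]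
    exact Real.sqrt_le_sqrt (by
      have := Real.pi_pos
      rw [div_le_div_iff₀ this this]; linarith)
  · rw [abs_mul, abs_of_nonneg (Real.sqrt_nonneg _)]
    calc Real.sqrt (2/Real.pi) * |Real.cos _| ≤ Real.sqrt (2/Real.pi) * 1 :=
          mul_le_mul_of_nonneg_left (Real.abs_cos_le_one _) (Real.sqrt_nonneg _)
      _ = _ := mul_one _

lemma chebP_mul_intble (s t : ℕ) :
    IntervalIntegrable (fun x => chebP s x * chebP t x * chebW x) volume (-1) 1 := by
  apply intble_mul_chebW ((chebP_meas s).mul (chebP_meas t)) (Real.sqrt (2/Real.pi) ^ 2)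
  intro x
  rw [Pi.mul_apply, abs_mul, sq]
  exact mul_le_mul (chebP_bound s x) (chebP_bound t x) (abs_nonneg _) (Real.sqrt_nonneg _)

lemma ortho (s t : ℕ) :
    (∫ x in (-1:ℝ)..1, chebP s x * chebP t x * chebW x)
      = if s = t then 1 else 0 := by
  have hpi := Real.pi_pos
  rcases Nat.eq_zero_or_pos s with hs | hs
  · rcases Nat.eq_zero_or_pos t with ht | ht
    · subst hs; subst ht
      have e : (fun x => chebP 0 x * chebP 0 x * chebW x)
          = fun x => (1/Real.pi) * (Real.cos (((0:ℤ):ℝ) * Real.arccos x) * chebW x) := by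
        funext x
        have h0 : chebP 0 x = Real.sqrt (1/Real.pi) := if_pos rfl
        rw [h0, Real.mul_self_sqrt (by positivity)]
        push_cast
        rw [zero_mul, Real.cos_zero]
        ring
      rw [e, intervalIntegral.integral_const_mul, core_integral, if_pos rfl, if_pos rfl]
      field_simp
    · subst hs
      have e : (fun x => chebP 0 x * chebP t x * chebW x)
          = fun x => (Real.sqrt (1/Real.pi) * Real.sqrt (2/Real.pi))
              * (Real.cos (((t:ℤ):ℝ) * Real.arccos x) * chebW x) := by
        funext x
        have h0 : chebP 0 x = Real.sqrt (1/Real.pi) := if_pos rfl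
        have h1 : chebP t x = Real.sqrt (2/Real.pi) * Real.cos ((t:ℝ) * Real.arccos x) :=
          if_neg (Nat.pos_iff_ne_zero.mp ht)
        rw [h0, h1]; push_cast; ring
      rw [e, intervalIntegral.integral_const_mul, core_integral,
        if_neg (by exact_mod_cast Nat.pos_iff_ne_zero.mp ht),
        if_neg (by omega), mul_zero]
  · rcases Nat.eq_zero_or_pos t with ht | ht
    · subst ht
      have e : (fun x => chebP s x * chebP 0 x * chebW x)
          = fun x => (Real.sqrt (1/Real.pi) * Real.sqrt (2/Real.pi))
              * (Real.cos (((s:ℤ):ℝ) * Real.arccos x) * chebW x) := by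
        funext x
        have h0 : chebP 0 x = Real.sqrt (1/Real.pi) := if_pos rfl
        have h1 : chebP s x = Real.sqrt (2/Real.pi) * Real.cos ((s:ℝ) * Real.arccos x) :=
          if_neg (Nat.pos_iff_ne_zero.mp hs)
        rw [h0, h1]; push_cast; ring
      rw [e, intervalIntegral.integral_const_mul, core_integral,
        if_neg (by exact_mod_cast Nat.pos_iff_ne_zero.mp hs),
        if_neg (by omega), mul_zero]
    · have e : (fun x => chebP s x * chebP t x * chebW x)
          = fun x => (1/Real.pi) * (Real.cos ((((s:ℤ)+(t:ℤ) : ℤ) :ℝ) * Real.arccos x) * chebW x)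
              + (1/Real.pi) * (Real.cos ((((s:ℤ)-(t:ℤ) : ℤ):ℝ) * Real.arccos x) * chebW x) := by
        funext x
        have h1 : chebP s x = Real.sqrt (2/Real.pi) * Real.cos ((s:ℝ) * Real.arccos x) :=
          if_neg (Nat.pos_iff_ne_zero.mp hs)
        have h2 : chebP t x = Real.sqrt (2/Real.pi) * Real.cos ((t:ℝ) * Real.arccos x) :=
          if_neg (Nat.pos_iff_ne_zero.mp ht)
        have hss : Real.sqrt (2/Real.pi) * Real.sqrt (2/Real.pi) = 2/Real.pi :=
          Real.mul_self_sqrt (by positivity)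
        rw [h1, h2, mul_mul_mul_comm, hss, cosmul]
        push_cast
        ring
      rw [e, intervalIntegral.integral_add ((core_intble _).const_mul _) ((core_intble _).const_mul _),
        intervalIntegral.integral_const_mul, intervalIntegral.integral_const_mul,
        core_integral, core_integral, if_neg (by omega)]
      by_cases hst : s = t
      · rw [if_pos (by omega : (s:ℤ) - t = 0), if_pos hst]
        field_simp
        ring
      · rw [if_neg (by omega : ¬ (s:ℤ) - t = 0), if_neg hst]
        ring

/-- geometric cosine sum -/
lemma geo_sum (n : ℕ) (hn : 0 < n) (t : ℤ) :
    (∑ s ∈ Finset.range (2 * n), Real.cos ((s : ℝ) * ((t : ℝ) * Real.pi / (n : ℝ))))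
      = if (2 * (n : ℤ)) ∣ t then (2 * (n : ℝ)) else 0 := by
  have hpi := Real.pi_pos
  have hn' : (n : ℝ) ≠ 0 := Nat.cast_ne_zero.mpr hn.ne'
  by_cases hdvd : (2 * (n : ℤ)) ∣ t
  · obtain ⟨u, hu⟩ := hdvd
    rw [if_pos ⟨u, hu⟩]
    have : ∀ s ∈ Finset.range (2 * n),
        Real.cos ((s : ℝ) * ((t : ℝ) * Real.pi / (n : ℝ))) = 1 := by
      intro s _
      have harg : (s : ℝ) * ((t : ℝ) * Real.pi / (n : ℝ))
          = ((s * u : ℤ) : ℝ) * (2 * Real.pi) := by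
        have ht : (t : ℝ) = 2 * (n : ℝ) * (u : ℝ) := by exact_mod_cast congrArg Int.cast hu
        push_cast [ht]
        field_simp
      rw [harg, Real.cos_int_mul_two_pi]
    rw [Finset.sum_congr rfl this, Finset.sum_const, Finset.card_range]
    push_cast; ring
  · rw [if_neg hdvd]
    set γ : ℝ := (t : ℝ) * Real.pi / (n : ℝ) with hγ
    set z : ℂ := Complex.exp (γ * Complex.I) with hz
    have hcos : ∀ s : ℕ, Real.cos ((s : ℝ) * γ) = (z ^ s).re := by
      intro s
      rw [hz, ← Complex.exp_nat_mul]
      have : (s : ℂ) * ((γ : ℂ) * Complex.I) = (((s : ℝ) * γ : ℝ) : ℂ) * Complex.I := by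
        push_cast; ring
      rw [this, Complex.exp_ofReal_mul_I_re]
    have hz1 : z ≠ 1 := by
      intro hcontra
      rw [hz, Complex.exp_eq_one_iff] at hcontra
      obtain ⟨k, hk⟩ := hcontra
      apply hdvd
      refine ⟨k, ?_⟩
      have hk' : (γ : ℂ) * Complex.I = ((k : ℂ) * (2 * Real.pi)) * Complex.I := by
        rw [hk]; ring
      have : (γ : ℂ) = (k : ℂ) * (2 * Real.pi) := mul_right_cancel₀ Complex.I_ne_zero hk'
      have hre : γ = (k : ℝ) * (2 * Real.pi) := by exact_mod_cast this
      rw [hγ] at hre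
      have : (t : ℝ) = (2 * (n:ℝ)) * k := by
        field_simp at hre
        nlinarith [hre]
      exact_mod_cast this
    have hzpow : z ^ (2 * n) = 1 := by
      rw [hz, ← Complex.exp_nat_mul]
      have : (2 * n : ℕ) * ((γ : ℂ) * Complex.I) = (t : ℂ) * (2 * Real.pi * Complex.I) := by
        have hnC : (n : ℂ) ≠ 0 := Nat.cast_ne_zero.mpr hn.ne'
        rw [hγ]
        push_cast
        field_simp
      rw [this]
      exact_mod_cast Complex.exp_int_mul_two_pi_mul_I t
    calc (∑ s ∈ Finset.range (2*n), Real.cos ((s:ℝ) * γ))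
        = (∑ s ∈ Finset.range (2*n), z ^ s).re := by
          rw [Complex.re_sum]; exact Finset.sum_congr rfl fun s _ => hcos s
      _ = 0 := by rw [geom_sum_eq hz1, hzpow]; simp

/-- Dirichlet-type partial sum -/
noncomputable def dirT (r : ℕ) (γ : ℝ) : ℝ :=
  2 * (∑ s ∈ Finset.range (r + 1), Real.cos ((s : ℝ) * γ)) - 1

noncomputable def fullE (n : ℕ) (γ : ℝ) : ℝ :=
  ∑ s ∈ Finset.range (2 * n), Real.cos ((s : ℝ) * γ)

lemma cos_reflect (n : ℕ) (hn : 0 < n) (t : ℤ) (s : ℕ) (hs : s ≤ 2 * n) :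
    Real.cos (((2 * n - s : ℕ) : ℝ) * ((t : ℝ) * Real.pi / n))
      = Real.cos ((s : ℝ) * ((t : ℝ) * Real.pi / n)) := by
  have hn' : (n : ℝ) ≠ 0 := Nat.cast_ne_zero.mpr hn.ne'
  have hcast : ((2 * n - s : ℕ) : ℝ) = 2 * (n : ℝ) - s := by
    push_cast [Nat.cast_sub hs]; ring
  have harg : ((2 * n - s : ℕ) : ℝ) * ((t : ℝ) * Real.pi / n)
      = (t : ℝ) * (2 * Real.pi) - (s : ℝ) * ((t : ℝ) * Real.pi / n) := by
    rw [hcast]; field_simp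
  rw [harg, Real.cos_sub]
  have c1 : Real.cos ((t : ℝ) * (2 * Real.pi)) = 1 := Real.cos_int_mul_two_pi t
  have c2 : Real.sin ((t : ℝ) * (2 * Real.pi)) = 0 := by
    have : (t : ℝ) * (2 * Real.pi) = ((2 * t : ℤ) : ℝ) * Real.pi := by push_cast; ring
    rw [this, Real.sin_int_mul_pi]
  rw [c1, c2]; ring

lemma dirT_pair (n : ℕ) (hn : 0 < n) (t : ℤ) (r : ℕ) (hr : r ≤ n - 1) :
    dirT r ((t : ℝ) * Real.pi / n) + dirT (2 * n - 1 - r) ((t : ℝ) * Real.pi / n)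
      = 2 * fullE n ((t : ℝ) * Real.pi / n) := by
  set γ : ℝ := (t : ℝ) * Real.pi / n with hγ
  have key : (∑ s ∈ Finset.range (r + 1), Real.cos ((s : ℝ) * γ))
      + (∑ s ∈ Finset.range (2 * n - 1 - r + 1), Real.cos ((s : ℝ) * γ))
      = fullE n γ + 1 := by
    have h1 : 2 * n - 1 - r + 1 = 2 * n - r := by omega
    rw [h1]
    have hsplit : (∑ s ∈ Finset.range (2 * n), Real.cos ((s : ℝ) * γ))
        = (∑ s ∈ Finset.range (2 * n - r), Real.cos ((s : ℝ) * γ))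
          + ∑ s ∈ Finset.Ico (2 * n - r) (2 * n), Real.cos ((s : ℝ) * γ) := by
      rw [Finset.range_eq_Ico, ← Finset.sum_Ico_consecutive _ (by omega : 0 ≤ 2 * n - r)
        (by omega : 2 * n - r ≤ 2 * n), ← Finset.range_eq_Ico]
    have hrefl : (∑ s ∈ Finset.Ico (2 * n - r) (2 * n), Real.cos ((s : ℝ) * γ))
        = ∑ s ∈ Finset.Ico 1 (r + 1), Real.cos ((s : ℝ) * γ) := by
      apply Finset.sum_nbij' (i := fun s => 2 * n - s) (j := fun s => 2 * n - s)
      · intro a ha; simp only [Finset.mem_Ico] at *; omega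
      · intro a ha; simp only [Finset.mem_Ico] at *; omega
      · intro a ha; simp only [Finset.mem_Ico] at ha; omega
      · intro a ha; simp only [Finset.mem_Ico] at ha; omega
      · intro a ha
        simp only [Finset.mem_Ico] at ha
        rw [hγ, cos_reflect n hn t a (by omega)]
    have hico : (∑ s ∈ Finset.Ico 1 (r + 1), Real.cos ((s : ℝ) * γ))
        = (∑ s ∈ Finset.range (r + 1), Real.cos ((s : ℝ) * γ)) - 1 := by
      rw [Finset.range_eq_Ico, ← Finset.sum_Ico_consecutive _ (by omega : 0 ≤ 1)
        (by omega : 1 ≤ r + 1)]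
      simp
    have := hsplit
    rw [hrefl, hico] at this
    rw [fullE, this]
    ring
  rw [dirT, dirT]
  linarith [key]

lemma dirT_sum (n m : ℕ) (hm : 0 < m) (hmn : m < n) (t : ℤ) :
    (∑ r ∈ Finset.Icc (n - m) (n + m - 1), dirT r ((t : ℝ) * Real.pi / n))
      = 2 * m * fullE n ((t : ℝ) * Real.pi / n) := by
  set γ : ℝ := (t : ℝ) * Real.pi / n with hγ
  have hsplit : Finset.Icc (n - m) (n + m - 1) = Finset.Ioc (n - m - 1) (n + m - 1) := by
    ext a; simp only [Finset.mem_Icc, Finset.mem_Ioc]; omega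
  rw [hsplit, ← Finset.sum_Ioc_consecutive _ (by omega : n - m - 1 ≤ n - 1)
    (by omega : n - 1 ≤ n + m - 1)]
  have hre : (∑ r ∈ Finset.Ioc (n - 1) (n + m - 1), dirT r γ)
      = ∑ r ∈ Finset.Ioc (n - m - 1) (n - 1), dirT (2 * n - 1 - r) γ := by
    apply Finset.sum_nbij' (i := fun r => 2 * n - 1 - r) (j := fun r => 2 * n - 1 - r)
    · intro a ha; simp only [Finset.mem_Ioc] at *; omega
    · intro a ha; simp only [Finset.mem_Ioc] at *; omega
    · intro a ha; simp only [Finset.mem_Ioc] at ha; omega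
    · intro a ha; simp only [Finset.mem_Ioc] at ha; omega
    · intro a ha
      simp only [Finset.mem_Ioc] at ha
      congr 1
      omega
  rw [hre, ← Finset.sum_add_distrib]
  have : ∀ r ∈ Finset.Ioc (n - m - 1) (n - 1), dirT r γ + dirT (2 * n - 1 - r) γ
      = 2 * fullE n γ := by
    intro r hr
    simp only [Finset.mem_Ioc] at hr
    exact dirT_pair n (by omega) t r (by omega)
  rw [Finset.sum_congr rfl this, Finset.sum_const, Nat.card_Ioc]
  have hcard : n - 1 - (n - m - 1) = m := by omega
  rw [hcard, nsmul_eq_mul]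
  push_cast; ring

/-- arccos at a Chebyshev node -/
lemma arccos_chebNode (n k : ℕ) (hk1 : 1 ≤ k) (hk2 : k ≤ n) :
    Real.arccos (chebNode n k) = (2 * (k : ℝ) - 1) * Real.pi / (2 * (n : ℝ)) := by
  have hpi := Real.pi_pos
  have hn : (0:ℝ) < n := by exact_mod_cast Nat.lt_of_lt_of_le (by omega) hk2
  have hk1' : (1:ℝ) ≤ k := by exact_mod_cast hk1
  have hk2' : (k:ℝ) ≤ n := by exact_mod_cast hk2
  apply Real.arccos_cos
  · apply div_nonneg (by nlinarith) (by positivity)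
  · rw [div_le_iff₀ (by positivity)]
    nlinarith

/-- value of Darboux kernel at pairs of Chebyshev nodes -/
lemma darboux_node (n : ℕ) (hn : 0 < n) (hI jJ : ℕ) (hh1 : 1 ≤ hI) (hh2 : hI ≤ n)
    (hj1 : 1 ≤ jJ) (hj2 : jJ ≤ n) (r : ℕ) :
    Real.pi * darboux r (chebNode n hI) (chebNode n jJ)
      = (dirT r ((((hI : ℤ) - (jJ : ℤ) : ℤ) : ℝ) * Real.pi / n)
          + dirT r ((((hI : ℤ) + (jJ : ℤ) - 1 : ℤ) : ℝ) * Real.pi / n)) / 2 := by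
  have hpi := Real.pi_pos
  have hn' : (n : ℝ) ≠ 0 := Nat.cast_ne_zero.mpr hn.ne'
  set α : ℝ := (((hI : ℤ) - (jJ : ℤ) : ℤ) : ℝ) * Real.pi / n with hα
  set β : ℝ := (((hI : ℤ) + (jJ : ℤ) - 1 : ℤ) : ℝ) * Real.pi / n with hβ
  set θh : ℝ := (2 * (hI : ℝ) - 1) * Real.pi / (2 * (n : ℝ)) with hθh
  set θj : ℝ := (2 * (jJ : ℝ) - 1) * Real.pi / (2 * (n : ℝ)) with hθj
  have key : ∀ s : ℕ, Real.pi * (chebP s (chebNode n hI) * chebP s (chebNode n jJ))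
      = Real.cos ((s:ℝ) * α) + Real.cos ((s:ℝ) * β) - (if s = 0 then 1 else 0) := by
    intro s
    rcases Nat.eq_zero_or_pos s with hs | hs
    · subst hs
      have h0 : chebP 0 (chebNode n hI) = Real.sqrt (1/Real.pi) := if_pos rfl
      have h1 : chebP 0 (chebNode n jJ) = Real.sqrt (1/Real.pi) := if_pos rfl
      rw [h0, h1, Real.mul_self_sqrt (by positivity)]
      norm_num
    · have h0 : chebP s (chebNode n hI)
          = Real.sqrt (2/Real.pi) * Real.cos ((s:ℝ) * θh) := by
        rw [chebP, if_neg (Nat.pos_iff_ne_zero.mp hs), arccos_chebNode n hI hh1 hh2]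
      have h1 : chebP s (chebNode n jJ)
          = Real.sqrt (2/Real.pi) * Real.cos ((s:ℝ) * θj) := by
        rw [chebP, if_neg (Nat.pos_iff_ne_zero.mp hs), arccos_chebNode n jJ hj1 hj2]
      have hss : Real.sqrt (2/Real.pi) * Real.sqrt (2/Real.pi) = 2/Real.pi :=
        Real.mul_self_sqrt (by positivity)
      rw [h0, h1, mul_mul_mul_comm, hss, cosmul]
      have e1 : (s:ℝ) * θh + (s:ℝ) * θj = (s:ℝ) * β := by
        rw [hθh, hθj, hβ]; push_cast; field_simp; ring
      have e2 : (s:ℝ) * θh - (s:ℝ) * θj = (s:ℝ) * α := by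
        rw [hθh, hθj, hα]; push_cast; field_simp; ring
      rw [e1, e2, if_neg (Nat.pos_iff_ne_zero.mp hs)]
      field_simp
      ring
  rw [darboux, Finset.mul_sum, Finset.sum_congr rfl (fun s _ => key s)]
  rw [Finset.sum_sub_distrib, Finset.sum_add_distrib]
  have hind : (∑ s ∈ Finset.range (r+1), (if s = 0 then (1:ℝ) else 0)) = 1 := by
    rw [Finset.sum_ite_eq' (Finset.range (r+1)) 0 (fun _ => (1:ℝ))]
    simp
  rw [hind, dirT, dirT]
  ring

/-- the fundamental interpolation property -/
lemma delta_node (n m : ℕ) (hm : 0 < m) (hmn : m < n) (hI jJ : ℕ) (hh1 : 1 ≤ hI)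
    (hh2 : hI ≤ n) (hj1 : 1 ≤ jJ) (hj2 : jJ ≤ n) :
    (Real.pi / n) * vpK n m (chebNode n hI) (chebNode n jJ) = if hI = jJ then 1 else 0 := by
  have hpi := Real.pi_pos
  have hn : 0 < n := by omega
  have hn' : (n : ℝ) ≠ 0 := Nat.cast_ne_zero.mpr hn.ne'
  have hm' : (m : ℝ) ≠ 0 := Nat.cast_ne_zero.mpr hm.ne'
  set t1 : ℤ := (hI : ℤ) - (jJ : ℤ) with ht1
  set t2 : ℤ := (hI : ℤ) + (jJ : ℤ) - 1 with ht2
  have e0 : (Real.pi / n) * vpK n m (chebNode n hI) (chebNode n jJ)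
      = (1/(n * (2*m))) * ∑ r ∈ Finset.Icc (n - m) (n + m - 1),
          Real.pi * darboux r (chebNode n hI) (chebNode n jJ) := by
    rw [vpK, ← Finset.mul_sum]
    field_simp
  rw [e0, Finset.sum_congr rfl (fun r _ => darboux_node n hn hI jJ hh1 hh2 hj1 hj2 r)]
  have e1 : (∑ r ∈ Finset.Icc (n - m) (n + m - 1),
      (dirT r ((t1:ℝ) * Real.pi / n) + dirT r ((t2:ℝ) * Real.pi / n)) / 2)
      = ((∑ r ∈ Finset.Icc (n - m) (n + m - 1), dirT r ((t1:ℝ) * Real.pi / n))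
        + (∑ r ∈ Finset.Icc (n - m) (n + m - 1), dirT r ((t2:ℝ) * Real.pi / n))) / 2 := by
    rw [← Finset.sum_add_distrib, ← Finset.sum_div]
  rw [e1, dirT_sum n m hm hmn t1, dirT_sum n m hm hmn t2]
  have hE1 : fullE n ((t1:ℝ) * Real.pi / n) = if hI = jJ then 2 * (n:ℝ) else 0 := by
    rw [fullE, geo_sum n hn t1]
    by_cases hij : hI = jJ
    · have : (2 * (n:ℤ)) ∣ t1 := by rw [ht1, hij, sub_self]; exact dvd_zero _
      rw [if_pos this, if_pos hij]
    · have : ¬ (2 * (n:ℤ)) ∣ t1 := by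
        intro hdvd
        have h0 : t1 = 0 := by
          apply Int.eq_zero_of_dvd_of_natAbs_lt_natAbs hdvd
          rw [ht1]
          omega
        rw [ht1] at h0
        omega
      rw [if_neg this, if_neg hij]
  have hE2 : fullE n ((t2:ℝ) * Real.pi / n) = 0 := by
    have : ¬ (2 * (n:ℤ)) ∣ t2 := by
      intro hdvd
      have h0 : t2 = 0 := by
        apply Int.eq_zero_of_dvd_of_natAbs_lt_natAbs hdvd
        rw [ht2]
        omega
      rw [ht2] at h0
      omega
    rw [fullE, geo_sum n hn t2, if_neg this]
  rw [hE1, hE2]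
  by_cases hij : hI = jJ
  · rw [if_pos hij, if_pos hij]
    field_simp
    ring
  · rw [if_neg hij, if_neg hij]
    ring

lemma darboux_symm (r : ℕ) (x y : ℝ) : darboux r x y = darboux r y x := by
  unfold darboux; exact Finset.sum_congr rfl fun s _ => mul_comm _ _

lemma vpK_symm (n m : ℕ) (x y : ℝ) : vpK n m x y = vpK n m y x := by
  unfold vpK
  congr 1
  exact Finset.sum_congr rfl fun r _ => darboux_symm r x y


lemma darboux_prod_fun (r q : ℕ) (y z : ℝ) :
    (fun x => darboux r y x * darboux q z x * chebW x)
      = fun x => ∑ p ∈ (Finset.range (r+1)) ×ˢ (Finset.range (q+1)),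
          (chebP p.1 y * chebP p.2 z) * (chebP p.1 x * chebP p.2 x * chebW x) := by
  funext x
  rw [Finset.sum_product, darboux, darboux, Finset.sum_mul_sum,
    Finset.sum_mul]
  refine Finset.sum_congr rfl fun s _ => ?_
  rw [Finset.sum_mul]
  exact Finset.sum_congr rfl fun u _ => by ring

lemma darboux_prod_intble (r q : ℕ) (y z : ℝ) :
    IntervalIntegrable (fun x => darboux r y x * darboux q z x * chebW x) volume (-1) 1 := by
  rw [darboux_prod_fun]
  have e : (fun x => ∑ p ∈ (Finset.range (r+1)) ×ˢ (Finset.range (q+1)),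
      (chebP p.1 y * chebP p.2 z) * (chebP p.1 x * chebP p.2 x * chebW x))
      = ∑ p ∈ (Finset.range (r+1)) ×ˢ (Finset.range (q+1)),
        (fun x => (chebP p.1 y * chebP p.2 z) * (chebP p.1 x * chebP p.2 x * chebW x)) := by
    funext x; rw [Finset.sum_apply]
  rw [e]
  exact IntervalIntegrable.sum _ (fun p _ => (chebP_mul_intble p.1 p.2).const_mul _)

lemma darboux_prod_integral (r q : ℕ) (hqr : q ≤ r) (y z : ℝ) :
    (∫ x in (-1:ℝ)..1, darboux r y x * darboux q z x * chebW x) = darboux q y z := by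
  have hstep : (∫ x in (-1:ℝ)..1, ∑ p ∈ (Finset.range (r+1)) ×ˢ (Finset.range (q+1)),
      (chebP p.1 y * chebP p.2 z) * (chebP p.1 x * chebP p.2 x * chebW x))
      = ∑ p ∈ (Finset.range (r+1)) ×ˢ (Finset.range (q+1)),
        ∫ x in (-1:ℝ)..1, (chebP p.1 y * chebP p.2 z) * (chebP p.1 x * chebP p.2 x * chebW x) :=
    intervalIntegral.integral_finset_sum
      (fun p _ => (chebP_mul_intble p.1 p.2).const_mul _)
  rw [darboux_prod_fun, hstep]
  have e2 : ∀ p ∈ (Finset.range (r+1)) ×ˢ (Finset.range (q+1)),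
      (∫ x in (-1:ℝ)..1, (chebP p.1 y * chebP p.2 z) * (chebP p.1 x * chebP p.2 x * chebW x))
      = if p.1 = p.2 then chebP p.1 y * chebP p.2 z else 0 := by
    intro p _
    rw [intervalIntegral.integral_const_mul, ortho, mul_ite, mul_one, mul_zero]
  rw [Finset.sum_congr rfl e2, Finset.sum_product]
  have e3 : ∀ s ∈ Finset.range (r+1),
      (∑ u ∈ Finset.range (q+1), if s = u then chebP s y * chebP u z else 0)
      = if s ∈ Finset.range (q+1) then chebP s y * chebP s z else 0 := by
    intro s _
    rw [Finset.sum_ite_eq]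
  rw [Finset.sum_congr rfl e3, Finset.sum_ite_mem,
    Finset.inter_eq_right.mpr (by intro a ha; simp only [Finset.mem_range] at *; omega),
    darboux]

lemma vp_prod_fun (N M m : ℕ) (y z : ℝ) :
    (fun x => vpK N m y x * vpK M m z x * chebW x)
      = fun x => ∑ p ∈ (Finset.Icc (N-m) (N+m-1)) ×ˢ (Finset.Icc (M-m) (M+m-1)),
          (1/(2*(m:ℝ)) * (1/(2*(m:ℝ))))
            * (darboux p.1 y x * darboux p.2 z x * chebW x) := by
  funext x
  rw [Finset.sum_product, vpK, vpK]
  simp only [Finset.mul_sum, Finset.sum_mul]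
  rw [Finset.sum_comm]
  refine Finset.sum_congr rfl fun r _ => ?_
  refine Finset.sum_congr rfl fun q _ => ?_
  ring

lemma vp_prod_intble (N M m : ℕ) (y z : ℝ) :
    IntervalIntegrable (fun x => vpK N m y x * vpK M m z x * chebW x) volume (-1) 1 := by
  rw [vp_prod_fun]
  have e : (fun x => ∑ p ∈ (Finset.Icc (N-m) (N+m-1)) ×ˢ (Finset.Icc (M-m) (M+m-1)),
      (1/(2*(m:ℝ)) * (1/(2*(m:ℝ)))) * (darboux p.1 y x * darboux p.2 z x * chebW x))
      = ∑ p ∈ (Finset.Icc (N-m) (N+m-1)) ×ˢ (Finset.Icc (M-m) (M+m-1)),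
        (fun x => (1/(2*(m:ℝ)) * (1/(2*(m:ℝ)))) * (darboux p.1 y x * darboux p.2 z x * chebW x)) := by
    funext x; rw [Finset.sum_apply]
  rw [e]
  exact IntervalIntegrable.sum _ (fun p _ => (darboux_prod_intble p.1 p.2 y z).const_mul _)

lemma vp_prod_integral (n m : ℕ) (hm : 0 < m) (hmn : m < n) (y z : ℝ) :
    (∫ x in (-1:ℝ)..1, vpK (3*n) m y x * vpK n m z x * chebW x) = vpK n m y z := by
  have hstep : (∫ x in (-1:ℝ)..1, ∑ p ∈ (Finset.Icc (3*n-m) (3*n+m-1)) ×ˢ (Finset.Icc (n-m) (n+m-1)),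
      (1/(2*(m:ℝ)) * (1/(2*(m:ℝ)))) * (darboux p.1 y x * darboux p.2 z x * chebW x))
      = ∑ p ∈ (Finset.Icc (3*n-m) (3*n+m-1)) ×ˢ (Finset.Icc (n-m) (n+m-1)),
        ∫ x in (-1:ℝ)..1, (1/(2*(m:ℝ)) * (1/(2*(m:ℝ)))) * (darboux p.1 y x * darboux p.2 z x * chebW x) :=
    intervalIntegral.integral_finset_sum
      (fun p _ => (darboux_prod_intble p.1 p.2 y z).const_mul _)
  rw [vp_prod_fun, hstep]
  have e2 : ∀ p ∈ (Finset.Icc (3*n-m) (3*n+m-1)) ×ˢ (Finset.Icc (n-m) (n+m-1)),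
      (∫ x in (-1:ℝ)..1, (1/(2*(m:ℝ)) * (1/(2*(m:ℝ))))
          * (darboux p.1 y x * darboux p.2 z x * chebW x))
      = (1/(2*(m:ℝ)) * (1/(2*(m:ℝ)))) * darboux p.2 y z := by
    intro p hp
    simp only [Finset.mem_product, Finset.mem_Icc] at hp
    rw [intervalIntegral.integral_const_mul,
      darboux_prod_integral p.1 p.2 (by omega) y z]
  rw [Finset.sum_congr rfl e2, Finset.sum_product]
  have e3 : ∀ r ∈ Finset.Icc (3*n-m) (3*n+m-1),
      (∑ q ∈ Finset.Icc (n-m) (n+m-1), (1/(2*(m:ℝ)) * (1/(2*(m:ℝ)))) * darboux q y z)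
      = (1/(2*(m:ℝ))) * ((1/(2*(m:ℝ))) * ∑ q ∈ Finset.Icc (n-m) (n+m-1), darboux q y z) := by
    intro r _
    rw [← Finset.mul_sum, mul_assoc]
  rw [Finset.sum_congr rfl e3, Finset.sum_const, Nat.card_Icc]
  have hcard : 3*n + m - 1 + 1 - (3*n - m) = 2*m := by omega
  rw [hcard, nsmul_eq_mul, vpK]
  have hm' : (m:ℝ) ≠ 0 := Nat.cast_ne_zero.mpr hm.ne'
  push_cast
  field_simp

theorem wav_orthogonal_to_scal (n m : ℕ) (hm : 0 < m) (hmn : m < n)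
    (k : ℕ) (hk : k ∈ Finset.Icc 1 (2 * n)) (h : ℕ) (hh : h ∈ Finset.Icc 1 n) :
    (∫ x in (-1 : ℝ)..1, wav n m k x * scal n m h x * chebW x) = 0 := by
  simp only [Finset.mem_Icc] at hh hk
  set Y : ℝ := yNode n k with hY
  set c : ℝ := Real.pi / (3 * (n : ℝ)) with hc
  set G : ℝ → ℝ → ℝ := fun y x => vpK (3*n) m y x * scal n m h x * chebW x with hG
  have hGfun : ∀ y : ℝ, G y = fun x =>
      (Real.pi / (n:ℝ)) * (vpK (3*n) m y x * vpK n m (chebNode n h) x * chebW x) := by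
    intro y; funext x; rw [hG]; simp only [scal]; ring
  have hGint : ∀ y : ℝ, IntervalIntegrable (G y) volume (-1) 1 := by
    intro y; rw [hGfun y]
    exact (vp_prod_intble (3*n) n m y (chebNode n h)).const_mul _
  have hGval : ∀ y : ℝ, (∫ x in (-1:ℝ)..1, G y x) = scal n m h y := by
    intro y
    have : (∫ x in (-1:ℝ)..1, G y x)
        = ∫ x in (-1:ℝ)..1, (Real.pi / (n:ℝ))
            * (vpK (3*n) m y x * vpK n m (chebNode n h) x * chebW x) := by
      rw [hGfun y]
    rw [this, intervalIntegral.integral_const_mul, vp_prod_integral n m hm hmn,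
      vpK_symm, scal]
  have e : (fun x => wav n m k x * scal n m h x * chebW x)
      = fun x => c * G Y x
        - ∑ j ∈ Finset.Icc 1 n, (scal n m j Y * c) * G (chebNode n j) x := by
    funext x
    rw [hG, hY, hc, wav, sub_mul, sub_mul, Finset.sum_mul, Finset.sum_mul]
    congr 1
    · ring
    · exact Finset.sum_congr rfl fun j _ => by ring
  have hsumint : IntervalIntegrable
      (fun x => ∑ j ∈ Finset.Icc 1 n, (scal n m j Y * c) * G (chebNode n j) x)
      volume (-1) 1 := by
    have e2 : (fun x => ∑ j ∈ Finset.Icc 1 n, (scal n m j Y * c) * G (chebNode n j) x)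
        = ∑ j ∈ Finset.Icc 1 n, (fun x => (scal n m j Y * c) * G (chebNode n j) x) := by
      funext x; rw [Finset.sum_apply]
    rw [e2]
    exact IntervalIntegrable.sum _ (fun j _ => (hGint (chebNode n j)).const_mul _)
  rw [e, intervalIntegral.integral_sub ((hGint Y).const_mul c) hsumint,
    intervalIntegral.integral_const_mul, hGval Y]
  have hsum : (∫ x in (-1:ℝ)..1,
      ∑ j ∈ Finset.Icc 1 n, (scal n m j Y * c) * G (chebNode n j) x)
      = ∑ j ∈ Finset.Icc 1 n, ∫ x in (-1:ℝ)..1,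
          (scal n m j Y * c) * G (chebNode n j) x :=
    intervalIntegral.integral_finset_sum
      (fun j _ => (hGint (chebNode n j)).const_mul _)
  rw [hsum]
  have e3 : ∀ j ∈ Finset.Icc 1 n,
      (∫ x in (-1:ℝ)..1, (scal n m j Y * c) * G (chebNode n j) x)
      = if h = j then scal n m j Y * c else 0 := by
    intro j hj
    simp only [Finset.mem_Icc] at hj
    rw [intervalIntegral.integral_const_mul, hGval (chebNode n j)]
    have : scal n m h (chebNode n j) = if h = j then 1 else 0 := by
      rw [scal]
      exact delta_node n m hm hmn h j hh.1 hh.2 hj.1 hj.2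
    rw [this, mul_ite, mul_one, mul_zero]
  rw [Finset.sum_congr rfl e3, Finset.sum_ite_eq,
    if_pos (Finset.mem_Icc.mpr ⟨hh.1, hh.2⟩)]
  ring

end WavProof
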